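/- Let d ≥ 1, U ≥ 1, D > 1, and let f : ℝ^d → ℝ be convex and integrable with respect to every nondegenerate product Gaussian measure on ℝ^d. Let Θ̃ = {(μ,C) ∈ ℝ^d × ℝ^d : |μ_i| ≤ U and D⁻¹ ≤ C_ii² ≤ D with C_ii > 0 for all i}. Define L(μ,C) = ∫ f(μ + C ⊙ ε) dγ_d(ε) + (1/2)·Σ_i (C_ii² + μ_i² − 1) − Σ_i log C_ii, where γ_d is the standard Gaussian product measure on ℝ^d and ⊙ is the entrywise product. Then: (i) L is 1-strongly convex (with respect to the Euclidean norm) on the convex set Θ̃; and (ii) the map c⁻¹(μ,C) = (μ, (C_ii² + μ_i²)_i) satisfies ‖c⁻¹(θ₁) − c⁻¹(θ₂)‖ ≤ √(4U² + 4D + 1)·‖θ₁ − θ₂‖ for all θ₁, θ₂ ∈ Θ̃; equivalently, its inverse c satisfies ‖c(ω₁) − c(ω₂)‖ ≥ (4U² + 4D + 1)^{−1/2}·‖ω₁ − ω₂‖ for all ω₁, ω₂ ∈ Ω̃. Hence the negative ELBO ℓ restricted to Ω̃ is hidden convex with moduli μ_C = (4U² + 4D + 1)^{−1/2} and μ_H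 = 1. -/

import Mathlib

open MeasureTheory ProbabilityTheory

noncomputable section

/-- Parameter space `ℝ^d × ℝ^d`, realized as a Euclidean space indexed by
`Fin d ⊕ Fin d` (first component at `Sum.inl`, second at `Sum.inr`). -/
abbrev Param (d : ℕ) := EuclideanSpace ℝ (Fin d ⊕ Fin d)

/-- The Cholesky parameter domain
`Θ̃ = {(μ, C) : |μ_i| ≤ U, C_ii > 0, D⁻¹ ≤ C_ii² ≤ D}`. -/
def ThetaT (d : ℕ) (U D : ℝ) : Set (Param d) :=
  {θ | ∀ i, |θ (Sum.inl i)| ≤ U ∧ 0 < θ (Sum.inr i) ∧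
    D⁻¹ ≤ (θ (Sum.inr i)) ^ 2 ∧ (θ (Sum.inr i)) ^ 2 ≤ D}

/-- The standard Gaussian product measure `γ_d` on `ℝ^d`. -/
def stdGauss (d : ℕ) : Measure (Fin d → ℝ) := Measure.pi fun _ => gaussianReal 0 1

/-- The function `L(μ, C) = ∫ f(μ + C ⊙ ε) dγ_d(ε) + (1/2)∑_i (C_ii² + μ_i² − 1) − ∑_i log C_ii`. -/
def cholObjective (d : ℕ) (f : (Fin d → ℝ) → ℝ) (θ : Param d) : ℝ :=
  (∫ ε, f (fun i => θ (Sum.inl i) + θ (Sum.inr i) * ε i) ∂(stdGauss d)) +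
    (1 / 2) * ∑ i, ((θ (Sum.inr i)) ^ 2 + (θ (Sum.inl i)) ^ 2 - 1) -
    ∑ i, Real.log (θ (Sum.inr i))

/-- The inverse reparameterization `c⁻¹(μ, C) = (μ, (C_ii² + μ_i²)_i)` from Cholesky
parameters to expectation parameters. -/
def cInv {d : ℕ} (θ : Param d) : Param d :=
  WithLp.toLp 2 fun k => match k with
  | Sum.inl i => θ (Sum.inl i)
  | Sum.inr i => (θ (Sum.inr i)) ^ 2 + (θ (Sum.inl i)) ^ 2

/-! The objective splits as `L(θ) = ½‖θ‖² + E_ε[f(μ + C ⊙ ε)] − ∑ log C_ii − d/2`. The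
expectation is convex because `θ ↦ μ + C ⊙ ε` is linear for each fixed `ε` and `f` is convex, and
`−log` is convex, so `L − ½‖·‖²` is convex, i.e. `L` is `1`-strongly convex. For `c⁻¹`, the only
nonlinear coordinate is `C_ii² + μ_i²`, whose increment is `(C + C')(C − C') + (μ + μ')(μ − μ')`;
Cauchy–Schwarz with `(C + C')² ≤ 4D` and `(μ + μ')² ≤ 4U²` bounds its square by `4D + 4U²` times
the squared increment of `θ`. -/

lemma Set.ordConnected_setOf_pos_sq_mem_Icc (a b : ℝ) :
    Set.OrdConnected {x : ℝ | 0 < x ∧ a ≤ x ^ 2 ∧ x ^ 2 ≤ b} :=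
  ⟨fun _ hx _ hy _ hz =>
    ⟨hx.1.trans_le hz.1, hx.2.1.trans (pow_le_pow_left₀ hx.1.le hz.1 2),
      (pow_le_pow_left₀ (hx.1.le.trans hz.1) hz.2 2).trans hy.2.2⟩⟩

lemma convex_thetaT (d : ℕ) (U D : ℝ) : Convex ℝ (ThetaT d U D) := by
  intro θ₁ h₁ θ₂ h₂ a b ha hb hab i
  have h_mean := convex_closedBall (0 : ℝ) U (x := θ₁ (Sum.inl i)) (y := θ₂ (Sum.inl i))
    (by simpa using (h₁ i).1) (by simpa using (h₂ i).1) ha hb hab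
  have h_scale :=
    (Set.ordConnected_setOf_pos_sq_mem_Icc D⁻¹ D).convex (h₁ i).2 (h₂ i).2 ha hb hab
  simp only [mem_closedBall_zero_iff, Real.norm_eq_abs, smul_eq_mul] at h_mean h_scale
  exact ⟨h_mean, h_scale⟩

lemma ConvexOn.finset_sum {ι E : Type*} [AddCommGroup E] [Module ℝ E] {s : Set E}
    {t : Finset ι} {g : ι → E → ℝ} (hs : Convex ℝ s) (hg : ∀ i ∈ t, ConvexOn ℝ s (g i)) :
    ConvexOn ℝ s fun x => ∑ i ∈ t, g i x := by
  refine ⟨hs, fun x hx y hy a b ha hb hab => ?_⟩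
  simp only [smul_eq_mul, Finset.mul_sum, ← Finset.sum_add_distrib]
  exact Finset.sum_le_sum fun i hi => (hg i hi).2 hx hy ha hb hab

lemma ConvexOn.integral_of_ae {E α : Type*} [AddCommGroup E] [Module ℝ E] [MeasurableSpace α]
    {μ : Measure α} {s : Set E} {g : E → α → ℝ} (hs : Convex ℝ s)
    (hg : ∀ᵐ ω ∂μ, ConvexOn ℝ s fun x => g x ω) (hint : ∀ x ∈ s, Integrable (g x) μ) :
    ConvexOn ℝ s fun x => ∫ ω, g x ω ∂μ := by
  refine ⟨hs, fun x hx y hy a b ha hb hab => ?_⟩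
  have hxy : Integrable (fun ω => a * g x ω + b * g y ω) μ :=
    ((hint x hx).const_mul a).add ((hint y hy).const_mul b)
  calc ∫ ω, g (a • x + b • y) ω ∂μ ≤ ∫ ω, (a * g x ω + b * g y ω) ∂μ :=
        integral_mono_ae (hint _ (hs hx hy ha hb hab)) hxy
          (hg.mono fun ω hω => hω.2 hx hy ha hb hab)
    _ = a • ∫ ω, g x ω ∂μ + b • ∫ ω, g y ω ∂μ := by
        rw [integral_add ((hint x hx).const_mul a) ((hint y hy).const_mul b),
          integral_const_mul, integral_const_mul, smul_eq_mul, smul_eq_mul]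

lemma measurePreserving_const_add_mul_gaussianReal (m c : ℝ) :
    MeasurePreserving (fun x => m + c * x) (gaussianReal 0 1)
      (gaussianReal m (c ^ 2).toNNReal) := by
  refine ⟨by fun_prop, ?_⟩
  rw [show (fun x => m + c * x) = (m + ·) ∘ (c * ·) from rfl,
    ← Measure.map_map (by fun_prop) (by fun_prop), gaussianReal_map_const_mul,
    gaussianReal_map_const_add]
  congr 1
  · ring
  · ext
    simp [sq_nonneg]

lemma integrable_comp_affine_stdGauss {d : ℕ} {f : (Fin d → ℝ) → ℝ}
    (hint : ∀ (m s : Fin d → ℝ), (∀ i, 0 < s i) →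
      Integrable f (Measure.pi fun i => gaussianReal (m i) (s i).toNNReal))
    {m c : Fin d → ℝ} (hc : ∀ i, c i ≠ 0) :
    Integrable (fun ε => f fun i => m i + c i * ε i) (stdGauss d) := by
  have hmp : MeasurePreserving (fun ε i => m i + c i * ε i) (stdGauss d)
      (Measure.pi fun i => gaussianReal (m i) (c i ^ 2).toNNReal) :=
    measurePreserving_pi _ _ fun i => measurePreserving_const_add_mul_gaussianReal (m i) (c i)
  have hf := hint m (fun i => c i ^ 2) fun i => sq_pos_of_ne_zero (hc i)
  exact (hmp.integrable_comp hf.aestronglyMeasurable).mpr hf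

def cholReparam {d : ℕ} (ε : Fin d → ℝ) : Param d →ₗ[ℝ] Fin d → ℝ where
  toFun θ i := θ (Sum.inl i) + θ (Sum.inr i) * ε i
  map_add' _ _ := by ext; simp only [PiLp.add_apply, Pi.add_apply]; ring
  map_smul' _ _ := by
    ext; simp only [PiLp.smul_apply, smul_eq_mul, Pi.smul_apply, RingHom.id_apply]; ring

lemma convexOn_gaussianSmoothing {d : ℕ} {U D : ℝ} {f : (Fin d → ℝ) → ℝ}
    (hconv : ConvexOn ℝ Set.univ f)
    (hint : ∀ (m s : Fin d → ℝ), (∀ i, 0 < s i) →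
      Integrable f (Measure.pi fun i => gaussianReal (m i) (s i).toNNReal)) :
    ConvexOn ℝ (ThetaT d U D) fun θ =>
      ∫ ε, f (fun i => θ (Sum.inl i) + θ (Sum.inr i) * ε i) ∂(stdGauss d) :=
  ConvexOn.integral_of_ae (convex_thetaT d U D)
    (ae_of_all _ fun ε => (hconv.comp_linearMap (cholReparam ε)).subset
      (Set.subset_univ _) (convex_thetaT d U D))
    fun _ hθ => integrable_comp_affine_stdGauss hint fun i => (hθ i).2.1.ne'

lemma convexOn_sum_neg_log_thetaT (d : ℕ) (U D : ℝ) :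
    ConvexOn ℝ (ThetaT d U D) fun θ => ∑ i, -Real.log (θ (Sum.inr i)) :=
  ConvexOn.finset_sum (convex_thetaT d U D) fun i _ =>
    (strictConcaveOn_log_Ioi.concaveOn.neg.comp_linearMap
      (EuclideanSpace.proj (Sum.inr i) : Param d →L[ℝ] ℝ).toLinearMap).subset
      (fun _ hθ => (hθ i).2.1) (convex_thetaT d U D)

lemma cholObjective_sub_half_norm_sq (d : ℕ) (f : (Fin d → ℝ) → ℝ) (θ : Param d) :
    cholObjective d f θ - 1 / 2 * ‖θ‖ ^ 2 =
      (∫ ε, f (fun i => θ (Sum.inl i) + θ (Sum.inr i) * ε i) ∂(stdGauss d)) +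
        ∑ i, -Real.log (θ (Sum.inr i)) + -(d / 2) := by
  rw [cholObjective, EuclideanSpace.real_norm_sq_eq, Fintype.sum_sum_type,
    Finset.sum_sub_distrib, Finset.sum_add_distrib, Finset.sum_neg_distrib, Finset.sum_const,
    Finset.card_univ, Fintype.card_fin, nsmul_eq_mul, mul_one]
  ring

lemma sq_add_sq_sub_sq_add_sq_le {p q u v A B : ℝ} (hp : p ^ 2 ≤ A) (hq : q ^ 2 ≤ A)
    (hu : u ^ 2 ≤ B) (hv : v ^ 2 ≤ B) :
    (u ^ 2 + p ^ 2 - (v ^ 2 + q ^ 2)) ^ 2 ≤ (4 * B + 4 * A) * ((u - v) ^ 2 + (p - q) ^ 2) := by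
  have hsum_u : (u + v) ^ 2 ≤ 4 * B := by nlinarith [sq_nonneg (u - v)]
  have hsum_p : (p + q) ^ 2 ≤ 4 * A := by nlinarith [sq_nonneg (p - q)]
  calc (u ^ 2 + p ^ 2 - (v ^ 2 + q ^ 2)) ^ 2
        = ((u + v) * (u - v) + (p + q) * (p - q)) ^ 2 := by ring
    _ ≤ ((u + v) ^ 2 + (p + q) ^ 2) * ((u - v) ^ 2 + (p - q) ^ 2) := by
        nlinarith [sq_nonneg ((u + v) * (p - q) - (p + q) * (u - v))]
    _ ≤ (4 * B + 4 * A) * ((u - v) ^ 2 + (p - q) ^ 2) := by gcongr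

lemma norm_cInv_sub_sq_le {d : ℕ} {U D : ℝ} {θ₁ θ₂ : Param d} (h₁ : θ₁ ∈ ThetaT d U D)
    (h₂ : θ₂ ∈ ThetaT d U D) :
    ‖cInv θ₁ - cInv θ₂‖ ^ 2 ≤ (4 * U ^ 2 + 4 * D + 1) * ‖θ₁ - θ₂‖ ^ 2 := by
  rw [EuclideanSpace.real_norm_sq_eq, EuclideanSpace.real_norm_sq_eq, Fintype.sum_sum_type,
    Fintype.sum_sum_type, ← Finset.sum_add_distrib, ← Finset.sum_add_distrib, Finset.mul_sum]
  refine Finset.sum_le_sum fun i _ => ?_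
  have hmean : ∀ θ ∈ ThetaT d U D, θ (Sum.inl i) ^ 2 ≤ U ^ 2 := fun θ hθ =>
    sq_le_sq' (abs_le.mp (hθ i).1).1 (abs_le.mp (hθ i).1).2
  have hinc := sq_add_sq_sub_sq_add_sq_le (hmean θ₁ h₁) (hmean θ₂ h₂)
    (h₁ i).2.2.2 (h₂ i).2.2.2
  simp only [cInv, PiLp.sub_apply]
  nlinarith [sq_nonneg (θ₁ (Sum.inl i) - θ₂ (Sum.inl i))]

theorem hidden_convexity_of_variational_objective_general
    {d : ℕ} {U D : ℝ}
    (f : (Fin d → ℝ) → ℝ) (hconv : ConvexOn ℝ Set.univ f)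
    (hint : ∀ (m s : Fin d → ℝ), (∀ i, 0 < s i) →
      Integrable f (Measure.pi fun i => gaussianReal (m i) (s i).toNNReal)) :
    StrongConvexOn (ThetaT d U D) 1 (cholObjective d f) ∧
    ∀ θ₁ ∈ ThetaT d U D, ∀ θ₂ ∈ ThetaT d U D,
      ‖cInv θ₁ - cInv θ₂‖ ≤ Real.sqrt (4 * U ^ 2 + 4 * D + 1) * ‖θ₁ - θ₂‖ := by
  refine ⟨?_, fun θ₁ h₁ θ₂ h₂ => ?_⟩
  · rw [strongConvexOn_iff_convex]
    simp only [cholObjective_sub_half_norm_sq]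
    exact ((convexOn_gaussianSmoothing hconv hint).add
      (convexOn_sum_neg_log_thetaT d U D)).add_const _
  · calc ‖cInv θ₁ - cInv θ₂‖ ≤ √((4 * U ^ 2 + 4 * D + 1) * ‖θ₁ - θ₂‖ ^ 2) :=
          Real.le_sqrt_of_sq_le (norm_cInv_sub_sq_le h₁ h₂)
      _ = √(4 * U ^ 2 + 4 * D + 1) * ‖θ₁ - θ₂‖ := by
          rw [Real.sqrt_mul' _ (sq_nonneg _), Real.sqrt_sq (norm_nonneg _)]

/-- Proposition 3.2, hidden convexity of the variational objective:
for `d ≥ 1`, `U ≥ 1`, `D > 1` and `f : ℝ^d → ℝ` convex and integrable against every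
nondegenerate product Gaussian, (i) `L` is `1`-strongly convex on the convex set `Θ̃`,
and (ii) `c⁻¹` is `√(4U² + 4D + 1)`-Lipschitz on `Θ̃` (equivalently, `c` is expanding
with modulus `μ_C = (4U² + 4D + 1)^{-1/2}`); hence the negative ELBO restricted to `Ω̃`
is hidden convex with moduli `μ_C` and `μ_H = 1`. -/
theorem hidden_convexity_of_variational_objective
    {d : ℕ} (hd : 1 ≤ d) {U D : ℝ} (hU : 1 ≤ U) (hD : 1 < D)
    (f : (Fin d → ℝ) → ℝ) (hconv : ConvexOn ℝ Set.univ f)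
    (hint : ∀ (m s : Fin d → ℝ), (∀ i, 0 < s i) →
      Integrable f (Measure.pi fun i => gaussianReal (m i) (s i).toNNReal)) :
    StrongConvexOn (ThetaT d U D) 1 (cholObjective d f) ∧
    ∀ θ₁ ∈ ThetaT d U D, ∀ θ₂ ∈ ThetaT d U D,
      ‖cInv θ₁ - cInv θ₂‖ ≤ Real.sqrt (4 * U ^ 2 + 4 * D + 1) * ‖θ₁ - θ₂‖ :=
  hidden_convexity_of_variational_objective_general f hconv hint

end
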